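/- arXiv:2208.06223 — 3 statements merged into one kernel-verified Lean document; each statement's English description precedes it below -/
import Mathlib

section
/- Let 𝒫 be a finite set of parties and let 𝒵_s, 𝒵_a be adversary structures over 𝒫 satisfying the Q^(3,1)(𝒫, 𝒵_s, 𝒵_a) condition. Let Z_m, Z_α, Z_β ∈ 𝒵_s and Z* ∈ 𝒵_a, let S = 𝒫 ∖ Z_m, and let C, C' be sets with C ⊆ S, S ∖ C ⊆ Z_α, C' ⊆ C, and C ∖ C' ⊆ Z_β. Then C' ∖ Z* ≠ ∅, i.e., C' contains at least one party outside the corrupt set Z*. -/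
/-- In the VSS protocol: with `Q^(3,1)(𝒫, 𝒵_s, 𝒵_a)`, a subset `C'` of the
dealer's clique `C ⊆ S = 𝒫 ∖ Z_m` with `S ∖ C ⊆ Z_α ∈ 𝒵_s` and
`C ∖ C' ⊆ Z_β ∈ 𝒵_s` contains a party outside any corrupt set `Z* ∈ 𝒵_a`. -/
theorem clique_subset_contains_honest_Q31 {P : Type*} [Fintype P]
    (Zs Za : Set (Set P))
    (hQ31 : ∀ Z₁ ∈ Zs, ∀ Z₂ ∈ Zs, ∀ Z₃ ∈ Zs, ∀ Z₄ ∈ Za,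
      ¬ (Set.univ ⊆ Z₁ ∪ Z₂ ∪ Z₃ ∪ Z₄))
    (Zm Zα Zβ : Set P) (hZm : Zm ∈ Zs) (hZα : Zα ∈ Zs) (hZβ : Zβ ∈ Zs)
    (Zstar : Set P) (hZstar : Zstar ∈ Za)
    (S C C' : Set P)
    (hS : S = Set.univ \ Zm)
    (hCS : C ⊆ S) (hSC : S \ C ⊆ Zα)
    (hC'C : C' ⊆ C) (hCC' : C \ C' ⊆ Zβ) :
    (C' \ Zstar).Nonempty := by
  rcases Set.eq_empty_or_nonempty (C' \ Zstar) with h | h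
  · exfalso
    apply hQ31 Zm hZm Zα hZα Zβ hZβ Zstar hZstar
    intro x _
    by_cases hx1 : x ∈ Zm
    · exact Or.inl (Or.inl (Or.inl hx1))
    by_cases hx2 : x ∈ C
    · by_cases hx3 : x ∈ C'
      · right
        by_contra hx4
        exact Set.eq_empty_iff_forall_notMem.mp h x ⟨hx3, hx4⟩
      · exact Or.inl (Or.inr (hCC' ⟨hx2, hx3⟩))
    · exact Or.inl (Or.inl (Or.inr (hSC ⟨hS ▸ ⟨trivial, hx1⟩, hx2⟩)))
  · exact h
end

section
/- Let 𝒫 be a finite set of parties and let 𝒵_s, 𝒵_a be adversary structures over 𝒫 satisfying conditions Con. Let Z_m, Z_α ∈ 𝒵_s and Z_β, Z* ∈ 𝒵_a, let S = 𝒫 ∖ Z_m, and let C, C''' be sets with C ⊆ S, S ∖ C ⊆ Z_α, C''' ⊆ C, and C ∖ C''' ⊆ Z_β. Then C''' ∖ Z* ≠ ∅, i.e., C''' contains at least one party outside the corrupt set Z*. -/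
/-- In the VSS protocol (asynchronous case): under conditions `Con`, a subset
`C'''` of the dealer's clique `C ⊆ S = 𝒫 ∖ Z_m` with `S ∖ C ⊆ Z_α ∈ 𝒵_s` and
`C ∖ C''' ⊆ Z_β ∈ 𝒵_a` contains a party outside the corrupt set `Z* ∈ 𝒵_a`. -/
theorem clique_subset_contains_honest_async {P : Type*} [Fintype P]
    (Zs Za : Set (Set P))
    -- Con: Q^(3,1)(𝒫, 𝒵_s, 𝒵_a)
    (hQ31 : ∀ Z₁ ∈ Zs, ∀ Z₂ ∈ Zs, ∀ Z₃ ∈ Zs, ∀ Z₄ ∈ Za,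
      ¬ (Set.univ ⊆ Z₁ ∪ Z₂ ∪ Z₃ ∪ Z₄))
    -- Con: every set of 𝒵_a is contained in some set of 𝒵_s
    (hcover : ∀ Z ∈ Za, ∃ Z' ∈ Zs, Z ⊆ Z')
    (Zm Zα : Set P) (hZm : Zm ∈ Zs) (hZα : Zα ∈ Zs)
    (Zβ Zstar : Set P) (hZβ : Zβ ∈ Za) (hZstar : Zstar ∈ Za)
    (S C C''' : Set P)
    (hS : S = Set.univ \ Zm)
    (hCS : C ⊆ S) (hSC : S \ C ⊆ Zα)
    (hC'C : C''' ⊆ C) (hCC' : C \ C''' ⊆ Zβ) :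
    (C''' \ Zstar).Nonempty := by
  by_contra h
  rw [Set.not_nonempty_iff_eq_empty, Set.diff_eq_empty] at h
  obtain ⟨Zβ', hZβ's, hβsub⟩ := hcover Zβ hZβ
  apply hQ31 Zm hZm Zα hZα Zβ' hZβ's Zstar hZstar
  intro x _
  by_cases hxm : x ∈ Zm
  · exact Or.inl (Or.inl (Or.inl hxm))
  · have hxS : x ∈ S := by rw [hS]; exact ⟨trivial, hxm⟩
    by_cases hxC : x ∈ C
    · by_cases hxC' : x ∈ C'''
      · exact Or.inr (h hxC')
      · exact Or.inl (Or.inr (hβsub (hCC' ⟨hxC, hxC'⟩)))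
    · exact Or.inl (Or.inl (Or.inr (hSC ⟨hxS, hxC⟩)))
end

section
/- Let 𝒫 be a finite set of parties and let 𝒵_s, 𝒵_a be adversary structures over 𝒫 satisfying conditions Con. Let Z_m ∈ 𝒵_s, Z* ∈ 𝒵_a, let S = 𝒫 ∖ Z_m and H = S ∖ Z*, and let ℰ ⊆ S and ℰ' ⊆ ℰ be such that S ∖ ℰ ⊆ Z_β for some Z_β ∈ 𝒵_a and ℰ ∖ ℰ' ⊆ Z_α for some Z_α ∈ 𝒵_s. Then ℰ' ∩ H ≠ ∅, i.e., ℰ' contains at least one honest party of S. -/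
/-- In the asynchronous fallback path of VSS: under conditions `Con`, with
`S = 𝒫 ∖ Z_m`, honest parties `H = S ∖ Z*` (`Z* ∈ 𝒵_a`), `ℰ ⊆ S` with
`S ∖ ℰ ⊆ Z_β ∈ 𝒵_a` and `ℰ' ⊆ ℰ` with `ℰ ∖ ℰ' ⊆ Z_α ∈ 𝒵_s`, the set `ℰ'`
contains at least one honest party of `S`. -/
theorem vss_fallback_subset_contains_honest {P : Type*} [Fintype P]
    (Zs Za : Set (Set P))
    -- Con: Q^(3,1)(𝒫, 𝒵_s, 𝒵_a)
    (hQ31 : ∀ Z₁ ∈ Zs, ∀ Z₂ ∈ Zs, ∀ Z₃ ∈ Zs, ∀ Z₄ ∈ Za,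
      ¬ (Set.univ ⊆ Z₁ ∪ Z₂ ∪ Z₃ ∪ Z₄))
    -- Con: every set of 𝒵_a is contained in some set of 𝒵_s
    (hcover : ∀ Z ∈ Za, ∃ Z' ∈ Zs, Z ⊆ Z')
    (Zm : Set P) (hZm : Zm ∈ Zs)
    (Zstar : Set P) (hZstar : Zstar ∈ Za)
    (S H E E' : Set P)
    (hS : S = Set.univ \ Zm) (hH : H = S \ Zstar)
    (hES : E ⊆ S) (hE'E : E' ⊆ E)
    (hSE : ∃ Zβ ∈ Za, S \ E ⊆ Zβ)
    (hEE' : ∃ Zα ∈ Zs, E \ E' ⊆ Zα) :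
    (E' ∩ H).Nonempty := by
  obtain ⟨Zβ, hZβ, hSEβ⟩ := hSE
  obtain ⟨Zα, hZα, hEE'α⟩ := hEE'
  obtain ⟨Zβ', hZβ', hββ'⟩ := hcover Zβ hZβ
  by_contra h
  rw [Set.not_nonempty_iff_eq_empty] at h
  apply hQ31 Zm hZm Zβ' hZβ' Zα hZα Zstar hZstar
  intro x _
  by_cases hxm : x ∈ Zm
  · exact Or.inl (Or.inl (Or.inl hxm))
  have hxS : x ∈ S := hS ▸ ⟨trivial, hxm⟩
  by_cases hxE : x ∈ E
  · by_cases hxE' : x ∈ E'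
    · by_cases hxst : x ∈ Zstar
      · exact Or.inr hxst
      · have : x ∈ E' ∩ H := ⟨hxE', hH ▸ Set.mem_diff_of_mem hxS hxst⟩
        simp [h] at this
    · exact Or.inl (Or.inr (hEE'α ⟨hxE, hxE'⟩))
  · exact Or.inl (Or.inl (Or.inr (hββ' (hSEβ ⟨hxS, hxE⟩))))
end
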